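/- Under assumptions (i) M ⊥ R | X, G=2, (ii) M ⊥ G | X, and (iii) M ⊥ R | X, Y, G=1, with OR(x,y) as the odds ratio relative to Y=0, the target mean decomposes as E[Y | G=1] = Σ_{y,m,x} y · p(Y=y | X=x, M=m, R=1, G=1) · [ p(M=m, X=x, R=1 | G=1) + (OR(x,y)/E[OR(X,Y)|R=1,X=x,M=m,G=1]) · ((p(M=m | X=x, R=1, G=2) − p(M=m, R=1 | X=x, G=1)) / p(R=0 | X=x, G=1)) · p(X=x, R=0 | G=1) ]. -/

import Mathlib

/-!
Split `E[Y | G = 1]` over the cells `(x, m, y)` and over `R`. The `R = 1` part is the first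
summand. For the `R = 0` part, missingness at random in domain 2 together with `M ⊥ G | X`
gives `p(m | x, R = 1, G = 2) = p(m | x, G = 1)`, so the difference quotient in the formula is
`p(m | x, R = 0, G = 1)`. On the other hand `M ⊥ R | X, Y, G = 1` makes the cell odds
`p(x, m, y, R = 0) / p(x, m, y, R = 1)` independent of `m`, equal to `κ(x) · OR(x, y)` with
`κ(x)` the odds of `R = 0` at `Y = 0`; summing over `y` gives
`p(x, m, R = 0) = κ(x) · E[OR | R = 1, x, m] · p(x, m, R = 1)`, and `κ(x)` cancels.
-/

open Finset Set Real

noncomputable def Pr {Ω : Type*} [Fintype Ω] (μ : Ω → ℝ) (A : Set Ω) : ℝ :=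
  ∑ ω, A.indicator μ ω

noncomputable def cPr {Ω : Type*} [Fintype Ω] (μ : Ω → ℝ) (A B : Set Ω) : ℝ :=
  Pr μ (A ∩ B) / Pr μ B

noncomputable def cE {Ω : Type*} [Fintype Ω] (μ : Ω → ℝ) (f : Ω → ℝ) (B : Set Ω) : ℝ :=
  (∑ ω, B.indicator (fun ω' => μ ω' * f ω') ω) / Pr μ B

noncomputable def OddsR {Ω 𝓧 : Type*} [Fintype Ω] (μ : Ω → ℝ) (X : Ω → 𝓧) (Y : Ω → ℝ)
    (R G : Ω → ℕ) (x : 𝓧) (y : ℝ) : ℝ :=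
  (cPr μ {ω | R ω = 0} {ω | X ω = x ∧ Y ω = y ∧ G ω = 1} *
      cPr μ {ω | R ω = 1} {ω | X ω = x ∧ Y ω = 0 ∧ G ω = 1}) /
  (cPr μ {ω | R ω = 1} {ω | X ω = x ∧ Y ω = y ∧ G ω = 1} *
      cPr μ {ω | R ω = 0} {ω | X ω = x ∧ Y ω = 0 ∧ G ω = 1})


section Pr

variable {Ω : Type*} [Fintype Ω] {μ : Ω → ℝ}

lemma Pr_mono (hμ : ∀ ω, 0 ≤ μ ω) {A B : Set Ω} (h : A ⊆ B) : Pr μ A ≤ Pr μ B :=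
  Finset.sum_le_sum fun ω _ => Set.indicator_le_indicator_of_subset h hμ ω

lemma Pr_pos_of_subset (hμ : ∀ ω, 0 ≤ μ ω) {A B : Set Ω} (hA : 0 < Pr μ A) (h : A ⊆ B) :
    0 < Pr μ B :=
  hA.trans_le (Pr_mono hμ h)

lemma cPr_pos (hμ : ∀ ω, 0 ≤ μ ω) {A B : Set Ω} (h : 0 < Pr μ (A ∩ B)) : 0 < cPr μ A B :=
  div_pos h (Pr_pos_of_subset hμ h inter_subset_right)

lemma sum_indicator_mul_eq_sum_fiber {α : Type*} [DecidableEq α] (f : Ω → α) {s : Finset α}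
    (hs : ∀ ω, f ω ∈ s) (B : Set Ω) {h : Ω → ℝ} {g : α → ℝ} (hg : ∀ ω ∈ B, h ω = g (f ω)) :
    ∑ ω, B.indicator (fun ω => μ ω * h ω) ω = ∑ a ∈ s, g a * Pr μ (B ∩ {ω | f ω = a}) := by
  simp only [Pr, Finset.mul_sum]
  rw [Finset.sum_comm]
  refine Finset.sum_congr rfl fun ω _ => ?_
  rw [Finset.sum_eq_single_of_mem (f ω) (hs ω)]
  · by_cases hω : ω ∈ B
    · simp [hω, hg ω hω, mul_comm]
    · simp [hω]
  · intro a _ ha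
    simp [Set.indicator_of_notMem (fun h : ω ∈ B ∩ {ω | f ω = a} => ha h.2.symm)]

lemma Pr_eq_sum_fiber {α : Type*} [DecidableEq α] (f : Ω → α) {s : Finset α}
    (hs : ∀ ω, f ω ∈ s) (A : Set Ω) : Pr μ A = ∑ a ∈ s, Pr μ (A ∩ {ω | f ω = a}) := by
  convert sum_indicator_mul_eq_sum_fiber (μ := μ) f hs A (h := 1) (g := 1) (fun _ _ => rfl)
    using 1 <;> simp [Pr]

lemma cE_eq_sum_fiber {α : Type*} [DecidableEq α] (f : Ω → α) {s : Finset α}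
    (hs : ∀ ω, f ω ∈ s) (B : Set Ω) {h : Ω → ℝ} {g : α → ℝ} (hg : ∀ ω ∈ B, h ω = g (f ω)) :
    cE μ h B = (∑ a ∈ s, g a * Pr μ (B ∩ {ω | f ω = a})) / Pr μ B := by
  rw [cE, sum_indicator_mul_eq_sum_fiber f hs B hg]

lemma Pr_eq_add_of_two_valued {α : Type*} [DecidableEq α] {f : Ω → α} {a b : α} (hab : a ≠ b)
    (hf : ∀ ω, f ω = a ∨ f ω = b) (A : Set Ω) :
    Pr μ A = Pr μ (A ∩ {ω | f ω = a}) + Pr μ (A ∩ {ω | f ω = b}) := by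
  rw [Pr_eq_sum_fiber f (s := {a, b}) (by simpa using hf), Finset.sum_pair hab]

lemma Pr_inter_mul_eq_of_cPr {A B C : Set Ω} (h : cPr μ (A ∩ B) C = cPr μ A C * cPr μ B C)
    (hC : Pr μ C ≠ 0) : Pr μ (A ∩ B ∩ C) * Pr μ C = Pr μ (A ∩ C) * Pr μ (B ∩ C) := by
  unfold cPr at h
  field_simp at h
  linear_combination h

lemma cPr_inter_eq_of_cPr {A B C : Set Ω} (h : cPr μ (A ∩ B) C = cPr μ A C * cPr μ B C)
    (hC : Pr μ C ≠ 0) (hBC : Pr μ (B ∩ C) ≠ 0) : cPr μ A (B ∩ C) = cPr μ A C := by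
  have := Pr_inter_mul_eq_of_cPr h hC
  rw [cPr, cPr, ← Set.inter_assoc, div_eq_div_iff hBC hC]
  linear_combination this

lemma Pr_inter_cross_mul_eq_of_cPr {A B B' C : Set Ω} (h : cPr μ (A ∩ B) C = cPr μ A C * cPr μ B C)
    (h' : cPr μ (A ∩ B') C = cPr μ A C * cPr μ B' C) (hC : Pr μ C ≠ 0) :
    Pr μ (A ∩ B ∩ C) * Pr μ (B' ∩ C) = Pr μ (A ∩ B' ∩ C) * Pr μ (B ∩ C) := by
  have e := Pr_inter_mul_eq_of_cPr h hC
  have e' := Pr_inter_mul_eq_of_cPr h' hC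
  refine mul_right_cancel₀ hC ?_
  linear_combination Pr μ (B' ∩ C) * e - Pr μ (B ∩ C) * e'

end Pr

section Model

variable {Ω 𝓧 𝓜 : Type*} [Fintype Ω] {μ : Ω → ℝ} {X : Ω → 𝓧} {M : Ω → 𝓜} {Y : Ω → ℝ}
  {R G : Ω → ℕ}

lemma cPr_M_R1_G2_eq_cPr_M_G1 {x : 𝓧} {m : 𝓜}
    (hMAR : cPr μ {ω | M ω = m ∧ R ω = 1} {ω | X ω = x ∧ G ω = 2} =
      cPr μ {ω | M ω = m} {ω | X ω = x ∧ G ω = 2} * cPr μ {ω | R ω = 1} {ω | X ω = x ∧ G ω = 2})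
    (hSel : ∀ g : ℕ, cPr μ {ω | M ω = m ∧ G ω = g} {ω | X ω = x} =
      cPr μ {ω | M ω = m} {ω | X ω = x} * cPr μ {ω | G ω = g} {ω | X ω = x})
    (hX : Pr μ {ω | X ω = x} ≠ 0) (hXG1 : Pr μ {ω | X ω = x ∧ G ω = 1} ≠ 0)
    (hXG2 : Pr μ {ω | X ω = x ∧ G ω = 2} ≠ 0)
    (hXR1G2 : Pr μ {ω | X ω = x ∧ R ω = 1 ∧ G ω = 2} ≠ 0) :
    cPr μ {ω | M ω = m} {ω | X ω = x ∧ R ω = 1 ∧ G ω = 2} =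
      cPr μ {ω | M ω = m} {ω | X ω = x ∧ G ω = 1} := by
  have hG : ∀ g : ℕ, {ω | X ω = x ∧ G ω = g} = {ω | G ω = g} ∩ {ω | X ω = x} := fun g =>
    Set.ext fun _ => and_comm
  have hR : {ω | X ω = x ∧ R ω = 1 ∧ G ω = 2} = {ω | R ω = 1} ∩ {ω | X ω = x ∧ G ω = 2} :=
    Set.ext fun _ => and_left_comm
  rw [hR, cPr_inter_eq_of_cPr (A := {ω | M ω = m}) (B := {ω | R ω = 1}) hMAR hXG2 (hR ▸ hXR1G2),
    hG, hG, cPr_inter_eq_of_cPr (A := {ω | M ω = m}) (B := {ω | G ω = 2}) (hSel 2) hX (hG 2 ▸ hXG2),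
    cPr_inter_eq_of_cPr (A := {ω | M ω = m}) (B := {ω | G ω = 1}) (hSel 1) hX (hG 1 ▸ hXG1)]

lemma identified_term_eq_Pr_R0 (hR : ∀ ω, R ω = 0 ∨ R ω = 1) {x : 𝓧} {m : 𝓜}
    (htransport : cPr μ {ω | M ω = m} {ω | X ω = x ∧ R ω = 1 ∧ G ω = 2} =
      cPr μ {ω | M ω = m} {ω | X ω = x ∧ G ω = 1})
    (hXG1 : Pr μ {ω | X ω = x ∧ G ω = 1} ≠ 0)
    (hXR0G1 : Pr μ {ω | X ω = x ∧ R ω = 0 ∧ G ω = 1} ≠ 0) :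
    (cPr μ {ω | M ω = m} {ω | X ω = x ∧ R ω = 1 ∧ G ω = 2} -
        cPr μ {ω | M ω = m ∧ R ω = 1} {ω | X ω = x ∧ G ω = 1}) /
      cPr μ {ω | R ω = 0} {ω | X ω = x ∧ G ω = 1} * cPr μ {ω | X ω = x ∧ R ω = 0} {ω | G ω = 1} =
    Pr μ {ω | X ω = x ∧ M ω = m ∧ R ω = 0 ∧ G ω = 1} / Pr μ {ω | G ω = 1} := by
  have hsplit := Pr_eq_add_of_two_valued (μ := μ) zero_ne_one hR {ω | X ω = x ∧ M ω = m ∧ G ω = 1}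
  rw [htransport]
  simp only [cPr, ← Set.ofPred_and, and_comm, and_left_comm, and_assoc] at hsplit ⊢
  rw [hsplit]
  field_simp
  ring

lemma OddsR_mul_odds_zero {x : 𝓧} (y : ℝ)
    (h1 : cPr μ {ω | R ω = 1} {ω | X ω = x ∧ Y ω = 0 ∧ G ω = 1} ≠ 0)
    (h0 : cPr μ {ω | R ω = 0} {ω | X ω = x ∧ Y ω = 0 ∧ G ω = 1} ≠ 0) :
    OddsR μ X Y R G x y * (cPr μ {ω | R ω = 0} {ω | X ω = x ∧ Y ω = 0 ∧ G ω = 1} /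
      cPr μ {ω | R ω = 1} {ω | X ω = x ∧ Y ω = 0 ∧ G ω = 1}) =
    cPr μ {ω | R ω = 0} {ω | X ω = x ∧ Y ω = y ∧ G ω = 1} /
      cPr μ {ω | R ω = 1} {ω | X ω = x ∧ Y ω = y ∧ G ω = 1} := by
  rw [OddsR]
  field_simp

lemma Pr_R0_cell_eq_of_condIndep {x : 𝓧} {m : 𝓜} {y : ℝ}
    (hCI : ∀ r : ℕ, cPr μ {ω | M ω = m ∧ R ω = r} {ω | X ω = x ∧ Y ω = y ∧ G ω = 1} =
      cPr μ {ω | M ω = m} {ω | X ω = x ∧ Y ω = y ∧ G ω = 1} *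
        cPr μ {ω | R ω = r} {ω | X ω = x ∧ Y ω = y ∧ G ω = 1})
    (h1 : cPr μ {ω | R ω = 1} {ω | X ω = x ∧ Y ω = y ∧ G ω = 1} ≠ 0)
    (h10 : cPr μ {ω | R ω = 1} {ω | X ω = x ∧ Y ω = 0 ∧ G ω = 1} ≠ 0)
    (h00 : cPr μ {ω | R ω = 0} {ω | X ω = x ∧ Y ω = 0 ∧ G ω = 1} ≠ 0) :
    Pr μ {ω | X ω = x ∧ M ω = m ∧ Y ω = y ∧ R ω = 0 ∧ G ω = 1} =
      cPr μ {ω | R ω = 0} {ω | X ω = x ∧ Y ω = 0 ∧ G ω = 1} /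
        cPr μ {ω | R ω = 1} {ω | X ω = x ∧ Y ω = 0 ∧ G ω = 1} *
      (OddsR μ X Y R G x y * Pr μ {ω | X ω = x ∧ M ω = m ∧ Y ω = y ∧ R ω = 1 ∧ G ω = 1}) := by
  obtain ⟨hR1C, hC⟩ := div_ne_zero_iff.mp h1
  have hcell : ∀ r : ℕ, {ω | X ω = x ∧ M ω = m ∧ Y ω = y ∧ R ω = r ∧ G ω = 1} =
      {ω | M ω = m} ∩ {ω | R ω = r} ∩ {ω | X ω = x ∧ Y ω = y ∧ G ω = 1} := fun r => by
    ext; simp only [mem_inter_iff, mem_ofPred_eq]; tauto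
  have hodds := Pr_inter_cross_mul_eq_of_cPr (A := {ω | M ω = m}) (B := {ω | R ω = 0})
    (B' := {ω | R ω = 1}) (hCI 0) (hCI 1) hC
  rw [mul_left_comm, ← mul_assoc, OddsR_mul_odds_zero y h10 h00, hcell, hcell, cPr, cPr]
  field_simp
  linear_combination hodds

lemma Pr_R0_eq_of_condIndep {x : 𝓧} {m : 𝓜}
    (hCI : ∀ y ∈ Set.range Y, ∀ r : ℕ,
      cPr μ {ω | M ω = m ∧ R ω = r} {ω | X ω = x ∧ Y ω = y ∧ G ω = 1} =
        cPr μ {ω | M ω = m} {ω | X ω = x ∧ Y ω = y ∧ G ω = 1} *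
          cPr μ {ω | R ω = r} {ω | X ω = x ∧ Y ω = y ∧ G ω = 1})
    (h1 : ∀ y ∈ Set.range Y, cPr μ {ω | R ω = 1} {ω | X ω = x ∧ Y ω = y ∧ G ω = 1} ≠ 0)
    (h10 : cPr μ {ω | R ω = 1} {ω | X ω = x ∧ Y ω = 0 ∧ G ω = 1} ≠ 0)
    (h00 : cPr μ {ω | R ω = 0} {ω | X ω = x ∧ Y ω = 0 ∧ G ω = 1} ≠ 0) :
    Pr μ {ω | X ω = x ∧ M ω = m ∧ R ω = 0 ∧ G ω = 1} =
      cPr μ {ω | R ω = 0} {ω | X ω = x ∧ Y ω = 0 ∧ G ω = 1} /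
        cPr μ {ω | R ω = 1} {ω | X ω = x ∧ Y ω = 0 ∧ G ω = 1} *
      ∑ y ∈ Finset.univ.image Y,
        OddsR μ X Y R G x y * Pr μ {ω | X ω = x ∧ M ω = m ∧ Y ω = y ∧ R ω = 1 ∧ G ω = 1} := by
  rw [Pr_eq_sum_fiber Y (fun ω => Finset.mem_image_of_mem Y (Finset.mem_univ ω)), Finset.mul_sum]
  refine Finset.sum_congr rfl fun y hy => ?_
  obtain ⟨ω, -, rfl⟩ := Finset.mem_image.mp hy
  rw [← Pr_R0_cell_eq_of_condIndep (hCI _ ⟨ω, rfl⟩) (h1 _ ⟨ω, rfl⟩) h10 h00]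
  congr 1; ext; simp only [mem_inter_iff, mem_ofPred_eq]; tauto

lemma cE_OddsR_eq_sum_div (x : 𝓧) (m : 𝓜) :
    cE μ (fun ω => OddsR μ X Y R G (X ω) (Y ω)) {ω | R ω = 1 ∧ X ω = x ∧ M ω = m ∧ G ω = 1} =
      (∑ y ∈ Finset.univ.image Y,
        OddsR μ X Y R G x y * Pr μ {ω | X ω = x ∧ M ω = m ∧ Y ω = y ∧ R ω = 1 ∧ G ω = 1}) /
      Pr μ {ω | X ω = x ∧ M ω = m ∧ R ω = 1 ∧ G ω = 1} := by
  rw [cE_eq_sum_fiber Y (fun ω => Finset.mem_image_of_mem Y (Finset.mem_univ ω)) _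
    (g := OddsR μ X Y R G x) fun ω hω => by rw [hω.2.1]]
  congr 1
  · refine Finset.sum_congr rfl fun y _ => ?_
    congr 2; ext; simp only [mem_inter_iff, mem_ofPred_eq]; tauto
  · congr 1; ext; simp only [mem_ofPred_eq]; tauto

lemma summand_eq_of_mem_range (hμ : ∀ ω, 0 ≤ μ ω) (hR : ∀ ω, R ω = 0 ∨ R ω = 1)
    (h0Y : (0 : ℝ) ∈ Set.range Y) {x : 𝓧} {m : 𝓜} {y : ℝ} (hy : y ∈ Set.range Y)
    (hpos : ∀ y ∈ Set.range Y, ∀ r g : ℕ, (r = 0 ∨ r = 1) → (g = 1 ∨ g = 2) →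
      0 < Pr μ {ω | X ω = x ∧ M ω = m ∧ Y ω = y ∧ R ω = r ∧ G ω = g})
    (hMAR : 0 < Pr μ {ω | X ω = x ∧ G ω = 2} →
      cPr μ {ω | M ω = m ∧ R ω = 1} {ω | X ω = x ∧ G ω = 2} =
        cPr μ {ω | M ω = m} {ω | X ω = x ∧ G ω = 2} *
        cPr μ {ω | R ω = 1} {ω | X ω = x ∧ G ω = 2})
    (hSel : ∀ g : ℕ, 0 < Pr μ {ω | X ω = x} →
      cPr μ {ω | M ω = m ∧ G ω = g} {ω | X ω = x} =
        cPr μ {ω | M ω = m} {ω | X ω = x} * cPr μ {ω | G ω = g} {ω | X ω = x})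
    (hCI : ∀ (r : ℕ) (y : ℝ), 0 < Pr μ {ω | X ω = x ∧ Y ω = y ∧ G ω = 1} →
      cPr μ {ω | M ω = m ∧ R ω = r} {ω | X ω = x ∧ Y ω = y ∧ G ω = 1} =
        cPr μ {ω | M ω = m} {ω | X ω = x ∧ Y ω = y ∧ G ω = 1} *
        cPr μ {ω | R ω = r} {ω | X ω = x ∧ Y ω = y ∧ G ω = 1}) :
    y * cPr μ {ω | Y ω = y} {ω | X ω = x ∧ M ω = m ∧ R ω = 1 ∧ G ω = 1} *
        (cPr μ {ω | M ω = m ∧ X ω = x ∧ R ω = 1} {ω | G ω = 1} +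
          (OddsR μ X Y R G x y /
              cE μ (fun ω => OddsR μ X Y R G (X ω) (Y ω))
                {ω | R ω = 1 ∧ X ω = x ∧ M ω = m ∧ G ω = 1}) *
            ((cPr μ {ω | M ω = m} {ω | X ω = x ∧ R ω = 1 ∧ G ω = 2} -
                cPr μ {ω | M ω = m ∧ R ω = 1} {ω | X ω = x ∧ G ω = 1}) /
              cPr μ {ω | R ω = 0} {ω | X ω = x ∧ G ω = 1}) *
            cPr μ {ω | X ω = x ∧ R ω = 0} {ω | G ω = 1}) =
      y * Pr μ {ω | X ω = x ∧ M ω = m ∧ Y ω = y ∧ G ω = 1} / Pr μ {ω | G ω = 1} := by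
  have atom : ∀ {y' : ℝ} {r g : ℕ} {A : Set Ω}, y' ∈ Set.range Y → (r = 0 ∨ r = 1) →
      (g = 1 ∨ g = 2) → {ω | X ω = x ∧ M ω = m ∧ Y ω = y' ∧ R ω = r ∧ G ω = g} ⊆ A →
      0 < Pr μ A := fun hy' hr hg hA => Pr_pos_of_subset hμ (hpos _ hy' _ _ hr hg) hA
  have hG1 : 0 < Pr μ {ω | G ω = 1} := atom h0Y (.inr rfl) (.inl rfl) fun _ h => h.2.2.2.2
  have hA1 : 0 < Pr μ {ω | X ω = x ∧ M ω = m ∧ R ω = 1 ∧ G ω = 1} :=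
    atom h0Y (.inr rfl) (.inl rfl) fun _ h => ⟨h.1, h.2.1, h.2.2.2⟩
  have hA0 : 0 < Pr μ {ω | X ω = x ∧ M ω = m ∧ R ω = 0 ∧ G ω = 1} :=
    atom h0Y (.inl rfl) (.inl rfl) fun _ h => ⟨h.1, h.2.1, h.2.2.2⟩
  have hX : 0 < Pr μ {ω | X ω = x} := atom h0Y (.inl rfl) (.inl rfl) fun _ h => h.1
  have hXG1 : 0 < Pr μ {ω | X ω = x ∧ G ω = 1} :=
    atom h0Y (.inl rfl) (.inl rfl) fun _ h => ⟨h.1, h.2.2.2.2⟩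
  have hXG2 : 0 < Pr μ {ω | X ω = x ∧ G ω = 2} :=
    atom h0Y (.inl rfl) (.inr rfl) fun _ h => ⟨h.1, h.2.2.2.2⟩
  have hXR0G1 : 0 < Pr μ {ω | X ω = x ∧ R ω = 0 ∧ G ω = 1} :=
    atom h0Y (.inl rfl) (.inl rfl) fun _ h => ⟨h.1, h.2.2.2⟩
  have hXR1G2 : 0 < Pr μ {ω | X ω = x ∧ R ω = 1 ∧ G ω = 2} :=
    atom h0Y (.inr rfl) (.inr rfl) fun _ h => ⟨h.1, h.2.2.2⟩
  have hRC : ∀ y ∈ Set.range Y, ∀ r : ℕ, (r = 0 ∨ r = 1) →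
      0 < Pr μ ({ω | R ω = r} ∩ {ω | X ω = x ∧ Y ω = y ∧ G ω = 1}) := fun y hy r hr =>
    atom hy hr (.inl rfl) fun _ h => ⟨h.2.2.2.1, h.1, h.2.2.1, h.2.2.2.2⟩
  have hCI' : ∀ y ∈ Set.range Y, ∀ r : ℕ, _ := fun y hy r =>
    hCI r y (Pr_pos_of_subset hμ (hRC y hy 1 (.inr rfl)) inter_subset_right)
  have h1 := fun y hy => (cPr_pos hμ (hRC y hy 1 (.inr rfl))).ne'
  have h10 := (cPr_pos hμ (hRC 0 h0Y 1 (.inr rfl))).ne'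
  have h00 := (cPr_pos hμ (hRC 0 h0Y 0 (.inl rfl))).ne'
  have hmissing := Pr_R0_eq_of_condIndep hCI' h1 h10 h00
  have hR0cell := Pr_R0_cell_eq_of_condIndep (hCI' y hy) (h1 y hy) h10 h00
  have hN := right_ne_zero_of_mul (hmissing ▸ hA0.ne')
  have hsplit := Pr_eq_add_of_two_valued (μ := μ) zero_ne_one hR
    {ω | X ω = x ∧ M ω = m ∧ Y ω = y ∧ G ω = 1}
  have htransport := cPr_M_R1_G2_eq_cPr_M_G1 (hMAR hXG2) (fun g => hSel g hX) hX.ne' hXG1.ne'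
    hXG2.ne' hXR1G2.ne'
  rw [mul_assoc (OddsR μ X Y R G x y / _),
    identified_term_eq_Pr_R0 hR htransport hXG1.ne' hXR0G1.ne', cE_OddsR_eq_sum_div]
  simp only [cPr, ← Set.ofPred_and, and_comm, and_left_comm, and_assoc] at hsplit ⊢
  rw [hsplit, hR0cell, hmissing]
  field_simp
  ring

end Model

theorem stmt15_general
    {Ω 𝓧 𝓜 : Type*} [Fintype Ω] [Fintype 𝓧] [Fintype 𝓜]
    (μ : Ω → ℝ) (X : Ω → 𝓧) (M : Ω → 𝓜) (Y : Ω → ℝ) (R G : Ω → ℕ)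
    (hμ0 : ∀ ω, 0 ≤ μ ω)
    (hR : ∀ ω, R ω = 0 ∨ R ω = 1)
    (h0Y : (0 : ℝ) ∈ Set.range Y)
    (hpos : ∀ x ∈ Set.range X, ∀ m ∈ Set.range M, ∀ y ∈ Set.range Y, ∀ r g : ℕ,
      (r = 0 ∨ r = 1) → (g = 1 ∨ g = 2) →
      0 < Pr μ {ω | X ω = x ∧ M ω = m ∧ Y ω = y ∧ R ω = r ∧ G ω = g})
    (hMAR : ∀ (m : 𝓜) (r : ℕ) (x : 𝓧),
      0 < Pr μ {ω | X ω = x ∧ G ω = 2} →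
      cPr μ {ω | M ω = m ∧ R ω = r} {ω | X ω = x ∧ G ω = 2} =
        cPr μ {ω | M ω = m} {ω | X ω = x ∧ G ω = 2} *
        cPr μ {ω | R ω = r} {ω | X ω = x ∧ G ω = 2})
    (hSel : ∀ (m : 𝓜) (g : ℕ) (x : 𝓧),
      0 < Pr μ {ω | X ω = x} →
      cPr μ {ω | M ω = m ∧ G ω = g} {ω | X ω = x} =
        cPr μ {ω | M ω = m} {ω | X ω = x} * cPr μ {ω | G ω = g} {ω | X ω = x})
    (hCI : ∀ (m : 𝓜) (r : ℕ) (x : 𝓧) (y : ℝ),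
      0 < Pr μ {ω | X ω = x ∧ Y ω = y ∧ G ω = 1} →
      cPr μ {ω | M ω = m ∧ R ω = r} {ω | X ω = x ∧ Y ω = y ∧ G ω = 1} =
        cPr μ {ω | M ω = m} {ω | X ω = x ∧ Y ω = y ∧ G ω = 1} *
        cPr μ {ω | R ω = r} {ω | X ω = x ∧ Y ω = y ∧ G ω = 1})
 :
    cE μ Y {ω | G ω = 1} =
      ∑ y ∈ Finset.univ.image Y, ∑ m : 𝓜, ∑ x : 𝓧,
        y * cPr μ {ω | Y ω = y} {ω | X ω = x ∧ M ω = m ∧ R ω = 1 ∧ G ω = 1} *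
          (cPr μ {ω | M ω = m ∧ X ω = x ∧ R ω = 1} {ω | G ω = 1} +
            (OddsR μ X Y R G x y /
                cE μ (fun ω => OddsR μ X Y R G (X ω) (Y ω))
                  {ω | R ω = 1 ∧ X ω = x ∧ M ω = m ∧ G ω = 1}) *
              ((cPr μ {ω | M ω = m} {ω | X ω = x ∧ R ω = 1 ∧ G ω = 2} -
                  cPr μ {ω | M ω = m ∧ R ω = 1} {ω | X ω = x ∧ G ω = 1}) /
                cPr μ {ω | R ω = 0} {ω | X ω = x ∧ G ω = 1}) *
              cPr μ {ω | X ω = x ∧ R ω = 0} {ω | G ω = 1}) := by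
  classical
  have hY : ∀ ω, Y ω ∈ Finset.univ.image Y := fun ω => Finset.mem_image_of_mem Y (mem_univ ω)
  rw [cE_eq_sum_fiber Y hY _ (h := Y) (g := id) fun _ _ => rfl, Finset.sum_div]
  refine Finset.sum_congr rfl fun y hy => ?_
  rw [Pr_eq_sum_fiber M (fun _ => mem_univ _), Finset.mul_sum, Finset.sum_div]
  refine Finset.sum_congr rfl fun m _ => ?_
  rw [Pr_eq_sum_fiber X (fun _ => mem_univ _), Finset.mul_sum, Finset.sum_div]
  refine Finset.sum_congr rfl fun x _ => ?_
  have hcell : {ω | G ω = 1} ∩ {ω | Y ω = y} ∩ {ω | M ω = m} ∩ {ω | X ω = x} =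
      {ω | X ω = x ∧ M ω = m ∧ Y ω = y ∧ G ω = 1} := by
    ext; simp only [mem_inter_iff, mem_ofPred_eq]; tauto
  by_cases hxm : x ∈ Set.range X ∧ m ∈ Set.range M
  · obtain ⟨ω, -, rfl⟩ := Finset.mem_image.mp hy
    rw [summand_eq_of_mem_range hμ0 hR h0Y ⟨ω, rfl⟩ (hpos x hxm.1 m hxm.2) (hMAR m 1 x)
      (fun g => hSel m g x) (fun r => hCI m r x), hcell, id, mul_div_assoc]
  · -- the cells are empty; the right side vanishes through `0 / 0 = 0`
    have hempty : ∀ A : Set Ω, A ⊆ {ω | X ω = x ∧ M ω = m} → Pr μ A = 0 := fun A hA => by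
      rw [Set.eq_empty_of_forall_notMem fun ω hω => hxm ⟨⟨ω, (hA hω).1⟩, ⟨ω, (hA hω).2⟩⟩]
      simp [Pr]
    have hA1 : Pr μ {ω | X ω = x ∧ M ω = m ∧ R ω = 1 ∧ G ω = 1} = 0 :=
      hempty _ fun _ h => ⟨h.1, h.2.1⟩
    rw [hcell, hempty _ fun _ h => ⟨h.1, h.2.1⟩, cPr, hA1]
    simp

theorem stmt15
    {Ω 𝓧 𝓜 : Type*} [Fintype Ω] [Fintype 𝓧] [Fintype 𝓜]
    (μ : Ω → ℝ) (X : Ω → 𝓧) (M : Ω → 𝓜) (Y : Ω → ℝ) (R G : Ω → ℕ)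
    (hμ0 : ∀ ω, 0 ≤ μ ω) (hμ1 : ∑ ω, μ ω = 1)
    (hR : ∀ ω, R ω = 0 ∨ R ω = 1)
    (hG : ∀ ω, G ω = 1 ∨ G ω = 2)
    (h0Y : (0 : ℝ) ∈ Set.range Y)
    (hpos : ∀ x ∈ Set.range X, ∀ m ∈ Set.range M, ∀ y ∈ Set.range Y, ∀ r g : ℕ,
      (r = 0 ∨ r = 1) → (g = 1 ∨ g = 2) →
      0 < Pr μ {ω | X ω = x ∧ M ω = m ∧ Y ω = y ∧ R ω = r ∧ G ω = g})
    (hMAR : ∀ (m : 𝓜) (r : ℕ) (x : 𝓧),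
      0 < Pr μ {ω | X ω = x ∧ G ω = 2} →
      cPr μ {ω | M ω = m ∧ R ω = r} {ω | X ω = x ∧ G ω = 2} =
        cPr μ {ω | M ω = m} {ω | X ω = x ∧ G ω = 2} *
        cPr μ {ω | R ω = r} {ω | X ω = x ∧ G ω = 2})
    (hSel : ∀ (m : 𝓜) (g : ℕ) (x : 𝓧),
      0 < Pr μ {ω | X ω = x} →
      cPr μ {ω | M ω = m ∧ G ω = g} {ω | X ω = x} =
        cPr μ {ω | M ω = m} {ω | X ω = x} * cPr μ {ω | G ω = g} {ω | X ω = x})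
    (hCI : ∀ (m : 𝓜) (r : ℕ) (x : 𝓧) (y : ℝ),
      0 < Pr μ {ω | X ω = x ∧ Y ω = y ∧ G ω = 1} →
      cPr μ {ω | M ω = m ∧ R ω = r} {ω | X ω = x ∧ Y ω = y ∧ G ω = 1} =
        cPr μ {ω | M ω = m} {ω | X ω = x ∧ Y ω = y ∧ G ω = 1} *
        cPr μ {ω | R ω = r} {ω | X ω = x ∧ Y ω = y ∧ G ω = 1})
 :
    cE μ Y {ω | G ω = 1} =
      ∑ y ∈ Finset.univ.image Y, ∑ m : 𝓜, ∑ x : 𝓧,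
        y * cPr μ {ω | Y ω = y} {ω | X ω = x ∧ M ω = m ∧ R ω = 1 ∧ G ω = 1} *
          (cPr μ {ω | M ω = m ∧ X ω = x ∧ R ω = 1} {ω | G ω = 1} +
            (OddsR μ X Y R G x y /
                cE μ (fun ω => OddsR μ X Y R G (X ω) (Y ω))
                  {ω | R ω = 1 ∧ X ω = x ∧ M ω = m ∧ G ω = 1}) *
              ((cPr μ {ω | M ω = m} {ω | X ω = x ∧ R ω = 1 ∧ G ω = 2} -
                  cPr μ {ω | M ω = m ∧ R ω = 1} {ω | X ω = x ∧ G ω = 1}) /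
                cPr μ {ω | R ω = 0} {ω | X ω = x ∧ G ω = 1}) *
              cPr μ {ω | X ω = x ∧ R ω = 0} {ω | G ω = 1}) :=
  stmt15_general μ X M Y R G hμ0 hR h0Y hpos hMAR hSel hCI
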